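/- Let M be a prime, let χ be a nontrivial Dirichlet character modulo M, let c be a positive integer with gcd(c, M) = 1, let p be an integer with gcd(p, cM) = 1, and let n be any integer. Then ∑_{a mod cM} χ(a) · S(p̄·a, p̄·n; cM) · e_{cM}( −p̄·(a + n) ) = c · g_χ · χ(p·c) · D_χ( r̄·n; M ), where p̄ denotes an integer inverse of p modulo cM and r̄ denotes an integer inverse of p·c modulo M. -/

import Mathlib

/-!
Expanding the Kloosterman sum, the left side is a double sum over `a` and units `x` modulo `cM`
of `χ(a) e_{cM}(p̄ (a (x - 1) + n (x⁻¹ - 1)))`. By the Chinese remainder theorem, with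
`s c + t M = 1`, one has `e_{cM}(z) = e_c(t z) e_M(s z)`, so this double sum factors into a part
modulo `c` and a part modulo `M`. Modulo `c`, orthogonality in `a` forces `x = 1` and the factor
is `c`. Modulo `M`, the sum over `a` is a twisted Gauss sum `χ̄(r̄ (x - 1)) g_χ` (`χ` is
primitive since `M` is prime), and the remaining sum over `x` is `χ(p c) D_χ(r̄ n; M)`.
-/

open Complex

/-- `eAdd q x = exp(2πi x / q)`. -/
noncomputable def eAdd (q : ℕ) (x : ℤ) : ℂ :=
  Complex.exp (2 * Real.pi * Complex.I * x / q)

/-- The Kloosterman sum `S(m, n; q) = ∑_{x mod q, (x,q)=1} e_q(m x + n x*)`. -/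
noncomputable def klo (m n : ℤ) (q : ℕ) [NeZero q] : ℂ :=
  ∑ x : (ZMod q)ˣ,
    eAdd q (m * ((x : ZMod q).val : ℤ) + n * (((x⁻¹ : (ZMod q)ˣ) : ZMod q).val : ℤ))

/-- The twisted Kloosterman sum `S_ψ(m, n; q)` for a Dirichlet character `ψ` mod `d`, `d ∣ q`. -/
noncomputable def kloTwist {d : ℕ} (ψ : DirichletCharacter ℂ d) (m n : ℤ) (q : ℕ)
    [NeZero q] (h : d ∣ q) : ℂ :=
  ∑ x : (ZMod q)ˣ,
    ψ (ZMod.castHom h (ZMod d) (x : ZMod q)) *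
      eAdd q (m * ((x : ZMod q).val : ℤ) + n * (((x⁻¹ : (ZMod q)ˣ) : ZMod q).val : ℤ))

/-- The Gauss sum `g_χ = ∑_{a mod M} χ(a) e_M(a)`. -/
noncomputable def gaussS {M : ℕ} [NeZero M] (χ : DirichletCharacter ℂ M) : ℂ :=
  ∑ a : ZMod M, χ a * eAdd M (a.val : ℤ)

/-- `D_χ(u; M) = ∑_{b mod M, (b(b−1),M)=1} χ̄(b−1) e_M((b* − 1) u)`. -/
noncomputable def dSum {M : ℕ} [NeZero M] (χ : DirichletCharacter ℂ M) (u : ℤ) : ℂ :=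
  ∑ b ∈ Finset.univ.filter (fun b : ZMod M => Nat.gcd (b * (b - 1)).val M = 1),
    (starRingEnd ℂ) (χ (b - 1)) * eAdd M (((b⁻¹ - 1 : ZMod M).val : ℤ) * u)

open ZMod

lemma chineseRemainder_apply {c M : ℕ} (h : c.Coprime M) (z : ZMod (c * M)) :
    chineseRemainder h z =
      (castHom (dvd_mul_right c M) (ZMod c) z, castHom (dvd_mul_left M c) (ZMod M) z) :=
  Prod.ext (Prod.fst_zmod_cast z) (Prod.snd_zmod_cast z)

lemma sum_sum_units_mul_of_coprime {R : Type*} [CommSemiring R] {c M : ℕ} [NeZero c] [NeZero M]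
    (h : c.Coprime M) (f : ZMod c → (ZMod c)ˣ → R) (g : ZMod M → (ZMod M)ˣ → R) :
    ∑ a : ZMod (c * M), ∑ x : (ZMod (c * M))ˣ,
      f (castHom (dvd_mul_right c M) (ZMod c) a)
          (Units.map (castHom (dvd_mul_right c M) (ZMod c)) x) *
        g (castHom (dvd_mul_left M c) (ZMod M) a)
          (Units.map (castHom (dvd_mul_left M c) (ZMod M)) x) =
      (∑ a, ∑ x, f a x) * (∑ a, ∑ x, g a x) := by
  let e : ZMod (c * M) × (ZMod (c * M))ˣ ≃ (ZMod c × (ZMod c)ˣ) × (ZMod M × (ZMod M)ˣ) :=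
    ((chineseRemainder h).toEquiv.prodCongr
      ((Units.mapEquiv (chineseRemainder h).toMulEquiv).trans MulEquiv.prodUnits).toEquiv).trans
      (Equiv.prodProdProdComm _ _ _ _)
  simp only [← Fintype.sum_prod_type', Fintype.sum_mul_sum]
  refine Fintype.sum_equiv e _ _ fun ⟨a, x⟩ => ?_
  simp only [e, Equiv.trans_apply, Equiv.prodCongr_apply, Prod.map, RingEquiv.toEquiv_eq_coe,
    EquivLike.coe_coe, chineseRemainder_apply, Equiv.prodProdProdComm_apply]
  congr 2 <;> ext <;> simp [MulEquiv.prodUnits, chineseRemainder_apply]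

lemma stdAddChar_eq_mul_of_coprime {c M : ℕ} [NeZero c] [NeZero M] {s t : ℤ}
    (hst : s * c + t * M = 1) (z : ZMod (c * M)) :
    stdAddChar z = stdAddChar ((t : ZMod c) * castHom (dvd_mul_right c M) (ZMod c) z) *
      stdAddChar ((s : ZMod M) * castHom (dvd_mul_left M c) (ZMod M) z) := by
  obtain ⟨j, rfl⟩ := ZMod.intCast_surjective z
  simp only [map_intCast, ← Int.cast_mul, stdAddChar_coe, ← Complex.exp_add]
  congr 1
  have hc : (c : ℂ) ≠ 0 := NeZero.ne _
  have hM : (M : ℂ) ≠ 0 := NeZero.ne _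
  have hst' : (s : ℂ) * c + t * M = 1 := by exact_mod_cast hst
  push_cast
  field_simp
  linear_combination (-(j : ℂ)) * hst'

lemma sum_sum_units_mul_stdAddChar_of_coprime {c M : ℕ} [NeZero c] [NeZero M] {s t : ℤ}
    (hst : s * c + t * M = 1) (φ : ZMod M → ℂ) (m n : ℤ) :
    ∑ a : ZMod (c * M), ∑ x : (ZMod (c * M))ˣ, φ (castHom (dvd_mul_left M c) (ZMod M) a) *
        stdAddChar ((m : ZMod (c * M)) *
          (a * ((x : ZMod (c * M)) - 1) +
            (n : ZMod (c * M)) * (((x⁻¹ : (ZMod (c * M))ˣ) : ZMod (c * M)) - 1))) =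
      (∑ a : ZMod c, ∑ x : (ZMod c)ˣ, stdAddChar ((t : ZMod c) * (m : ZMod c) *
          (a * ((x : ZMod c) - 1) + (n : ZMod c) * (((x⁻¹ : (ZMod c)ˣ) : ZMod c) - 1)))) *
        ∑ a : ZMod M, ∑ x : (ZMod M)ˣ, φ a * stdAddChar ((s : ZMod M) * (m : ZMod M) *
          (a * ((x : ZMod M) - 1) + (n : ZMod M) * (((x⁻¹ : (ZMod M)ˣ) : ZMod M) - 1))) := by
  rw [← sum_sum_units_mul_of_coprime (Nat.isCoprime_iff_coprime.mp ⟨s, t, hst⟩)]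
  refine Finset.sum_congr rfl fun a _ => Finset.sum_congr rfl fun x _ => ?_
  rw [stdAddChar_eq_mul_of_coprime hst]
  simp only [map_mul, map_add, map_sub, map_intCast, map_one, Units.coe_map, Units.coe_map_inv,
    MonoidHom.coe_coe]
  ring_nf

lemma sum_sum_units_addChar_eq_card {R R' : Type*} [CommRing R] [Fintype R] [DecidableEq R]
    [CommRing R'] [IsDomain R'] {ψ : AddChar R R'} (hψ : ψ.IsPrimitive) {w : R} (hw : IsUnit w)
    (v : R) :
    ∑ a : R, ∑ x : Rˣ, ψ (w * (a * (x - 1) + v * ((x⁻¹ : Rˣ) - 1))) = Fintype.card R := by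
  rw [Finset.sum_comm, Fintype.sum_eq_single 1]
  · simp
  intro x hx
  have hwx : w * (x - 1) ≠ 0 := by
    rw [Ne, hw.mul_right_eq_zero, sub_eq_zero]
    exact fun h => hx (Units.ext h)
  simp_rw [mul_add, AddChar.map_add_eq_mul, ← Finset.sum_mul,
    show ∀ a : R, w * (a * (x - 1)) = a * (w * (x - 1)) from fun a => by ring]
  rw [AddChar.sum_mulShift _ hψ, if_neg hwx, Nat.cast_zero, zero_mul]

lemma sum_sum_units_mul_addChar_eq_gaussSum_mul {R : Type*} [CommRing R] [IsDomain R] {N : ℕ}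
    [NeZero N] {χ : DirichletCharacter R N} (hχ : χ.IsPrimitive) (ψ : AddChar (ZMod N) R)
    (w v : ZMod N) :
    ∑ a, ∑ x : (ZMod N)ˣ, χ a * ψ (w * (a * (x - 1) + v * ((x⁻¹ : (ZMod N)ˣ) - 1))) =
      gaussSum χ ψ *
        ∑ x : (ZMod N)ˣ, χ⁻¹ (w * (x - 1)) * ψ (w * v * ((x⁻¹ : (ZMod N)ˣ) - 1)) := by
  rw [Finset.sum_comm, Finset.mul_sum]
  refine Finset.sum_congr rfl fun x _ => ?_
  rw [← mul_assoc, mul_comm (gaussSum χ ψ), ← gaussSum_mulShift_of_isPrimitive ψ hχ,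
    gaussSum, Finset.sum_mul]
  refine Finset.sum_congr rfl fun a _ => ?_
  rw [AddChar.mulShift_apply, mul_assoc, ← AddChar.map_add_eq_mul]
  ring_nf

lemma DirichletCharacter.isPrimitive_of_ne_one {R : Type*} [CommMonoidWithZero R] {M : ℕ}
    [Fact M.Prime] {χ : DirichletCharacter R M} (hχ : χ ≠ 1) : χ.IsPrimitive := by
  rcases (Fact.out : M.Prime).eq_one_or_self_of_dvd _ χ.conductor_dvd_level with h | h
  · exact absurd (χ.eq_one_iff_conductor_eq_one.mpr h) hχ
  · exact h

lemma eAdd_eq_stdAddChar (q : ℕ) [NeZero q] (x : ℤ) : eAdd q x = stdAddChar (x : ZMod q) := by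
  rw [eAdd, stdAddChar_coe]

lemma gaussS_eq_gaussSum {M : ℕ} [NeZero M] (χ : DirichletCharacter ℂ M) :
    gaussS χ = gaussSum χ stdAddChar := by
  simp [gaussS, gaussSum, eAdd_eq_stdAddChar]

lemma sum_mul_klo_mul_eAdd (N : ℕ) [NeZero N] (φ : ZMod N → ℂ) (m n : ℤ) :
    ∑ a : ZMod N, φ a * klo (m * a.val) (m * n) N * eAdd N (-(m * (a.val + n))) =
      ∑ a : ZMod N, ∑ x : (ZMod N)ˣ, φ a *
        stdAddChar ((m : ZMod N) *
          (a * ((x : ZMod N) - 1) + (n : ZMod N) * (((x⁻¹ : (ZMod N)ˣ) : ZMod N) - 1))) := by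
  refine Finset.sum_congr rfl fun a _ => ?_
  rw [klo, Finset.mul_sum, Finset.sum_mul]
  refine Finset.sum_congr rfl fun x _ => ?_
  rw [mul_assoc, eAdd_eq_stdAddChar, eAdd_eq_stdAddChar, ← AddChar.map_add_eq_mul]
  push_cast [natCast_val, cast_id', id]
  ring_nf

lemma dSum_eq_sum_units {M : ℕ} [NeZero M] (χ : DirichletCharacter ℂ M) (u : ℤ) :
    dSum χ u = ∑ x : (ZMod M)ˣ,
      χ⁻¹ ((x : ZMod M) - 1) *
        stdAddChar ((((x⁻¹ : (ZMod M)ˣ) : ZMod M) - 1) * (u : ZMod M)) := by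
  have hunits : ∀ b : ZMod M,
      Nat.gcd (b * (b - 1)).val M = 1 ↔ IsUnit b ∧ IsUnit (b - 1) := fun b => by
    rw [← Nat.Coprime, ← isUnit_iff_coprime, natCast_zmod_val, IsUnit.mul_iff]
  rw [dSum, Finset.filter_congr fun b _ => hunits b,
    ← Finset.sum_filter_of_ne (p := fun x : (ZMod M)ˣ => IsUnit ((x : ZMod M) - 1))
      fun x _ hx => by_contra fun h => hx (by rw [MulChar.map_nonunit _ h, zero_mul])]
  refine Finset.sum_bij (fun b hb => (Finset.mem_filter.mp hb).2.1.unit) (fun b hb => ?_)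
    (fun b _ b' _ h => congrArg Units.val h) (fun x hx => ?_) (fun b hb => ?_)
  · simpa using (Finset.mem_filter.mp hb).2.2
  · exact ⟨x, by simpa using hx, Units.ext rfl⟩
  · rw [← MulChar.star_apply', eAdd_eq_stdAddChar, ← inv_coe_unit, IsUnit.unit_spec]
    push_cast [natCast_val, cast_id', id]
    rfl

theorem stmt_4_general (M : ℕ) [Fact M.Prime] (χ : DirichletCharacter ℂ M) (hχ : χ ≠ 1)
    (c : ℕ) [NeZero c] (hc : Nat.gcd c M = 1)
    (p : ℤ) (n : ℤ)
    (pbar : ℤ) (hpbar : ((p * pbar : ℤ) : ZMod (c * M)) = 1)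
    (rbar : ℤ) (hrbar : ((p * (c : ℤ) * rbar : ℤ) : ZMod M) = 1) :
    ∑ a : ZMod (c * M),
        χ (ZMod.castHom (dvd_mul_left M c) (ZMod M) a) *
          klo (pbar * (a.val : ℤ)) (pbar * n) (c * M) *
          eAdd (c * M) (-(pbar * ((a.val : ℤ) + n))) =
      (c : ℂ) * gaussS χ * χ (((p * (c : ℤ) : ℤ) : ZMod M)) * dSum χ (rbar * n) := by
  obtain ⟨s, t, hst⟩ := Nat.isCoprime_iff_coprime.mpr hc
  have hpc : (p : ZMod c) * pbar = 1 := by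
    simpa using congrArg (castHom (dvd_mul_right c M) (ZMod c)) hpbar
  have hpM : (p : ZMod M) * pbar = 1 := by
    simpa using congrArg (castHom (dvd_mul_left M c) (ZMod M)) hpbar
  have htc : (t : ZMod c) * M = 1 := by simpa using congrArg (Int.cast : ℤ → ZMod c) hst
  have hsM : (s : ZMod M) * c = 1 := by simpa using congrArg (Int.cast : ℤ → ZMod M) hst
  push_cast at hrbar
  have hr : (s : ZMod M) * pbar = rbar := by
    linear_combination -(s : ZMod M) * pbar * hrbar + rbar * p * pbar * hsM + rbar * hpM
  have hχr : χ⁻¹ (rbar : ZMod M) = χ (p * c) := by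
    rw [MulChar.inv_apply', inv_eq_of_mul_eq_one_left hrbar]
  rw [sum_mul_klo_mul_eAdd, sum_sum_units_mul_stdAddChar_of_coprime hst,
    sum_sum_units_addChar_eq_card (isPrimitive_stdAddChar c)
      ((IsUnit.of_mul_eq_one _ htc).mul (IsUnit.of_mul_eq_one_right _ hpc)),
    sum_sum_units_mul_addChar_eq_gaussSum_mul (DirichletCharacter.isPrimitive_of_ne_one hχ), hr,
    ZMod.card, gaussS_eq_gaussSum, dSum_eq_sum_units, Finset.mul_sum, Finset.mul_sum,
    Finset.mul_sum]
  refine Finset.sum_congr rfl fun x _ => ?_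
  rw [map_mul, hχr]
  simp only [Int.cast_mul, Int.cast_natCast]
  ring_nf

/-- Evaluation of the full character sum modulo `cM`. -/
theorem stmt_4 (M : ℕ) [Fact M.Prime] (χ : DirichletCharacter ℂ M) (hχ : χ ≠ 1)
    (c : ℕ) [NeZero c] (hc : Nat.gcd c M = 1)
    (p : ℤ) (hp : Int.gcd p (c * M : ℕ) = 1) (n : ℤ)
    (pbar : ℤ) (hpbar : ((p * pbar : ℤ) : ZMod (c * M)) = 1)
    (rbar : ℤ) (hrbar : ((p * (c : ℤ) * rbar : ℤ) : ZMod M) = 1) :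
    ∑ a : ZMod (c * M),
        χ (ZMod.castHom (dvd_mul_left M c) (ZMod M) a) *
          klo (pbar * (a.val : ℤ)) (pbar * n) (c * M) *
          eAdd (c * M) (-(pbar * ((a.val : ℤ) + n))) =
      (c : ℂ) * gaussS χ * χ (((p * (c : ℤ) : ℤ) : ZMod M)) * dSum χ (rbar * n) :=
  stmt_4_general M χ hχ c hc p n pbar hpbar rbar hrbar
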